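/- The inference rule (𝒱-spec) preserves validity over any completely additive modal algebra: if 𝔄 is a Boolean algebra with completely additive operator ◇ (dual □), and θ ↦ θ̂ denotes interpretation of formulas, and for all valuations the premises p → χ(p), A χ(p) → A p, and α → □χ(p) are valid (where p does not occur in α, and A φ is interpreted as ⊤ when the value of φ is ⊤ and ⊥ otherwise), then α → □⊥ is valid over 𝔄. Algebraically: if for every c ∈ 𝔄, c ≤ χ̂(c) and (χ̂(c) = ⊤ implies c = ⊤) and θ̂(α) ≤ □χ̂(c), where χ̂(c) denotes the value of χ(p) under p ↦ c (fixed values for other variables), then θ̂(α) ≤ □⊥. -/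

import Mathlib

/-!
The complements `(g c)ᶜ` have supremum `⊤`: an upper bound `s` satisfies `(g s)ᶜ ≤ s ≤ g s`,
which forces `g s = ⊤` and hence `s = ⊤`. Complete additivity makes `◇⊤` the join of the
`◇(g c)ᶜ`, and `a ≤ □(g c)` says each of these lies below `aᶜ`; so `◇⊤ ≤ aᶜ`, i.e. `a ≤ □⊥`.
-/

def mbox {α : Type*} [BooleanAlgebra α] (f : α → α) (x : α) : α := (f xᶜ)ᶜ

section

variable {α : Type*} [BooleanAlgebra α]

theorem le_mbox_iff {f : α → α} {a x : α} : a ≤ mbox f x ↔ f xᶜ ≤ aᶜ :=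
  le_compl_comm

theorem isLUB_range_compl_top {g : α → α} (hle : ∀ c, c ≤ g c) (htop : ∀ c, g c = ⊤ → c = ⊤) :
    IsLUB (Set.range fun c => (g c)ᶜ) ⊤ := by
  refine ⟨fun _ _ => le_top, fun s hs => ?_⟩
  have hcompl : (g s)ᶜ ≤ g s := (hs ⟨s, rfl⟩).trans (hle s)
  exact (htop s (compl_le_self.mp hcompl)).ge

end

theorem stmt_17_general {α : Type*} [BooleanAlgebra α] (f : α → α)
    (hV : ∀ (X : Set α) (s : α), IsLUB X s → IsLUB (f '' X) (f s))
    (a : α) (g : α → α)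
    (h1 : ∀ c : α, c ≤ g c)
    (h2 : ∀ c : α, g c = ⊤ → c = ⊤)
    (h3 : ∀ c : α, a ≤ mbox f (g c)) :
    a ≤ mbox f ⊥ := by
  have hlub := hV _ ⊤ (isLUB_range_compl_top h1 h2)
  rw [le_mbox_iff, compl_bot]
  refine hlub.2 ?_
  rintro _ ⟨_, ⟨c, rfl⟩, rfl⟩
  exact le_mbox_iff.mp (h3 c)

/-- Soundness of the rule (𝒱-spec) over completely additive modal algebras,
in algebraic form: if `g : α → α` (the interpretation of `χ(p)` as the value
of `p` varies) satisfies `c ≤ g c`, `g c = ⊤ → c = ⊤`, and `a ≤ □(g c)` for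
all `c`, then `a ≤ □⊥`. -/
theorem stmt_17 {α : Type*} [BooleanAlgebra α] (f : α → α)
    (hjoin : ∀ x y : α, f (x ⊔ y) = f x ⊔ f y) (hbot : f ⊥ = ⊥)
    (hV : ∀ (X : Set α) (s : α), IsLUB X s → IsLUB (f '' X) (f s))
    (a : α) (g : α → α)
    (h1 : ∀ c : α, c ≤ g c)
    (h2 : ∀ c : α, g c = ⊤ → c = ⊤)
    (h3 : ∀ c : α, a ≤ mbox f (g c)) :
    a ≤ mbox f ⊥ :=
  stmt_17_general f hV a g h1 h2 h3
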